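/- The determinant of Lehmer's n×n tridiagonal matrix M(n), with entries M_{i,i} = 1, M_{i,i+1} = s·r^(i-1), M_{i+1,i} = s·r^(i-1), and all other entries zero, equals λ(n) = Σ_{0 ≤ k ≤ n/2} [n-k choose k]_q · (-1)^k · q^(k(k-1)) · z^k. -/
import Mathlib


/-- The Gaussian `q`-binomial coefficient `[n choose k]_q`, defined via the
Pascal-type recursion. It agrees with `(q;q)_n / ((q;q)_k (q;q)_{n-k})`. -/
def qbinom {R : Type*} [CommRing R] (q : R) : ℕ → ℕ → R
  | _, 0 => 1
  | 0, _ + 1 => 0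
  | n + 1, k + 1 => qbinom q n (k + 1) + q ^ (n - k) * qbinom q n k

/-- `λ(n) = Σ_{0 ≤ k ≤ n/2} [n-k choose k]_q · (-1)^k · q^(k(k-1)) · z^k`. -/
def lam {R : Type*} [CommRing R] (q z : R) (j : ℕ) : R :=
  ∑ k ∈ Finset.range (j / 2 + 1),
    qbinom q (j - k) k * (-1 : R) ^ k * q ^ (k * (k - 1)) * z ^ k

/-- Lehmer's tridiagonal matrix `M(n)` (1-based: `M_{i,i} = 1`,
`M_{i,i+1} = s·r^(i-1)`, `M_{i+1,i} = s·r^(i-1)`), with 0-based `Fin n` indices. -/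
def lehmerM {R : Type*} [CommRing R] (r s : R) (n : ℕ) : Matrix (Fin n) (Fin n) R :=
  Matrix.of fun a b =>
    if (a : ℕ) = (b : ℕ) then 1
    else if (a : ℕ) + 1 = (b : ℕ) then s * r ^ (a : ℕ)
    else if (b : ℕ) + 1 = (a : ℕ) then s * r ^ (b : ℕ)
    else 0

lemma qbinom_zero_right {R : Type*} [CommRing R] (q : R) (n : ℕ) : qbinom q n 0 = 1 := by
  cases n <;> rfl

lemma qbinom_eq_zero {R : Type*} [CommRing R] (q : R) :
    ∀ n k : ℕ, n < k → qbinom q n k = 0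
  | _, 0, h => by omega
  | 0, k+1, _ => rfl
  | n+1, k+1, h => by
      rw [qbinom, qbinom_eq_zero q n (k+1) (by omega), qbinom_eq_zero q n k (by omega)]
      ring

lemma lam_eq {R : Type*} [CommRing R] (q z : R) (j : ℕ) :
    lam q z j = ∑ k ∈ Finset.range (j + 1),
      qbinom q (j - k) k * (-1 : R) ^ k * q ^ (k * (k - 1)) * z ^ k := by
  rw [lam]
  apply Finset.sum_subset
  · exact Finset.range_subset_range.2 (by omega)
  · intro k hk hk2
    simp only [Finset.mem_range] at hk hk2
    rw [qbinom_eq_zero q (j - k) k (by omega)]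
    ring

lemma key_term {R : Type*} [CommRing R] (q z : R) (n k : ℕ) (hk : k ≤ n) :
    qbinom q (n + 2 - (k+1)) (k+1) * (-1 : R) ^ (k+1) * q ^ ((k+1) * (k+1-1)) * z ^ (k+1)
    = qbinom q (n + 1 - (k+1)) (k+1) * (-1 : R) ^ (k+1) * q ^ ((k+1) * (k+1-1)) * z ^ (k+1)
      - z * q ^ n * (qbinom q (n - k) k * (-1 : R) ^ k * q ^ (k * (k - 1)) * z ^ k) := by
  have h1 : n + 2 - (k+1) = (n - k) + 1 := by omega
  have h2 : n + 1 - (k+1) = n - k := by omega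
  rw [h1, h2, qbinom]
  rcases le_or_gt (2 * k) n with h | h
  · have hq : q ^ (n - k - k) * q ^ ((k+1) * (k+1-1)) = q ^ n * q ^ (k * (k - 1)) := by
      rw [← pow_add, ← pow_add]
      congr 1
      have e : (k+1) * (k+1-1) = k * (k - 1) + 2 * k := by
        cases k with
        | zero => rfl
        | succ m => simp [Nat.succ_sub_one]; ring
      rw [e]
      generalize k * (k - 1) = t
      omega
    calc (qbinom q (n-k) (k+1) + q ^ (n-k-k) * qbinom q (n-k) k) * (-1 : R) ^ (k+1)
            * q ^ ((k+1) * (k+1-1)) * z ^ (k+1)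
        = qbinom q (n-k) (k+1) * (-1 : R) ^ (k+1) * q ^ ((k+1) * (k+1-1)) * z ^ (k+1)
          + qbinom q (n-k) k * (-1 : R) ^ (k+1) * (q ^ (n-k-k) * q ^ ((k+1)*(k+1-1))) * z ^ (k+1) := by
          ring
      _ = _ := by
          rw [hq, pow_succ (-1 : R) k, pow_succ z k]
          ring
  · rw [qbinom_eq_zero q (n - k) k (by omega)]
    ring

lemma lam_rec {R : Type*} [CommRing R] (q z : R) (n : ℕ) :
    lam q z (n + 2) = lam q z (n + 1) - z * q ^ n * lam q z n := by
  simp only [lam_eq]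
  rw [Finset.sum_range_succ' _ (n + 2), Finset.sum_range_succ _ (n + 1),
    Finset.sum_range_succ' _ (n + 1)]
  have hlast : qbinom q (n + 2 - (n + 1 + 1)) (n + 1 + 1) * (-1 : R) ^ (n+1+1)
      * q ^ ((n+1+1) * (n+1+1-1)) * z ^ (n+1+1) = 0 := by
    rw [show n + 2 - (n + 1 + 1) = 0 by omega, qbinom_eq_zero q 0 (n+1+1) (by omega)]
    ring
  rw [hlast, add_zero, Finset.mul_sum]
  have hcongr : ∀ k ∈ Finset.range (n + 1),
      qbinom q (n + 2 - (k+1)) (k+1) * (-1 : R) ^ (k+1) * q ^ ((k+1) * (k+1-1)) * z ^ (k+1)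
      = qbinom q (n + 1 - (k+1)) (k+1) * (-1 : R) ^ (k+1) * q ^ ((k+1) * (k+1-1)) * z ^ (k+1)
        - z * q ^ n * (qbinom q (n - k) k * (-1 : R) ^ k * q ^ (k * (k - 1)) * z ^ k) := by
    intro k hk
    exact key_term q z n k (by simpa using Nat.lt_succ_iff.mp (Finset.mem_range.mp hk))
  rw [Finset.sum_congr rfl hcongr, Finset.sum_sub_distrib]
  simp [qbinom_zero_right]
  ring

lemma succAbove_val {m : ℕ} (p : Fin (m+1)) (i : Fin m) :
    ((p.succAbove i : Fin (m+1)) : ℕ) = if (i:ℕ) < (p:ℕ) then (i:ℕ) else (i:ℕ)+1 := by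
  rw [Fin.succAbove]
  split_ifs with h1 h2 h2 <;> simp [Fin.lt_def] at * <;> omega

lemma lehmerM_apply {R : Type*} [CommRing R] (r s : R) (m : ℕ) (a b : Fin m) :
    lehmerM r s m a b =
      if (a : ℕ) = (b : ℕ) then 1
      else if (a : ℕ) + 1 = (b : ℕ) then s * r ^ (a : ℕ)
      else if (b : ℕ) + 1 = (a : ℕ) then s * r ^ (b : ℕ)
      else 0 := rfl

lemma lehmer_sub {R : Type*} [CommRing R] (r s : R) (n : ℕ) :
    (lehmerM r s (n+1)).submatrix Fin.castSucc Fin.castSucc = lehmerM r s n := by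
  ext a b
  simp [lehmerM_apply, Matrix.submatrix_apply]

lemma det_minor {R : Type*} [CommRing R] (r s : R) (n : ℕ) :
    ((lehmerM r s (n+2)).submatrix (Fin.last (n+1)).succAbove
      ((⟨n, by omega⟩ : Fin (n+2)).succAbove)).det
    = s * r ^ n * (lehmerM r s n).det := by
  set N := (lehmerM r s (n+2)).submatrix (Fin.last (n+1)).succAbove
      ((⟨n, by omega⟩ : Fin (n+2)).succAbove) with hN
  rw [Matrix.det_succ_column N (Fin.last n)]
  rw [Finset.sum_eq_single (Fin.last n)]
  · have h1 : N (Fin.last n) (Fin.last n) = s * r ^ n := by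
      rw [hN]
      simp only [Matrix.submatrix_apply, lehmerM_apply, succAbove_val, Fin.val_last]
      split_ifs <;> first | rfl | omega
    have h2 : N.submatrix (Fin.last n).succAbove (Fin.last n).succAbove = lehmerM r s n := by
      ext a b
      have ha := a.isLt
      have hb := b.isLt
      rw [hN]
      simp only [Matrix.submatrix_apply, lehmerM_apply, succAbove_val, Fin.val_last]
      split_ifs <;> first | rfl | omega
    rw [h1, h2, Even.neg_one_pow (by simp : Even ((Fin.last n : ℕ) + (Fin.last n : ℕ)))]
    ring
  · intro i _ hi
    have hival : (i : ℕ) ≠ n := fun h => hi (Fin.ext (by simpa using h))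
    have h0 : N i (Fin.last n) = 0 := by
      rw [hN]
      simp only [Matrix.submatrix_apply, lehmerM_apply, succAbove_val, Fin.val_last]
      have := i.isLt
      split_ifs <;> first | rfl | omega
    rw [h0]
    ring
  · simp

lemma det_rec {R : Type*} [CommRing R] (r s : R) (n : ℕ) :
    (lehmerM r s (n+2)).det = (lehmerM r s (n+1)).det
      - (s * r ^ n) * (s * r ^ n) * (lehmerM r s n).det := by
  rw [Matrix.det_succ_row _ (Fin.last (n+1))]
  have hv : ∀ j ∈ (Finset.univ : Finset (Fin (n+2))),
      j ∉ ({(⟨n, by omega⟩ : Fin (n+2)), Fin.last (n+1)} : Finset (Fin (n+2))) →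
      (-1:R)^((Fin.last (n+1) : ℕ) + (j : ℕ)) * (lehmerM r s (n+2)) (Fin.last (n+1)) j
        * ((lehmerM r s (n+2)).submatrix (Fin.last (n+1)).succAbove j.succAbove).det = 0 := by
    intro j _ hj
    simp only [Finset.mem_insert, Finset.mem_singleton] at hj
    push_neg at hj
    have hj1 : (j : ℕ) ≠ n := fun h => hj.1 (Fin.ext (by simpa using h))
    have hj2 : (j : ℕ) ≠ n + 1 := fun h => hj.2 (Fin.ext (by simpa using h))
    have h0 : (lehmerM r s (n+2)) (Fin.last (n+1)) j = 0 := by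
      simp only [lehmerM_apply, Fin.val_last]
      have := j.isLt
      split_ifs <;> first | rfl | omega
    rw [h0]
    ring
  rw [← Finset.sum_subset (Finset.subset_univ _) hv,
    Finset.sum_pair (show (⟨n, by omega⟩ : Fin (n+2)) ≠ Fin.last (n+1) by
      exact Fin.ne_of_val_ne (by simp))]
  have hA : (lehmerM r s (n+2)) (Fin.last (n+1)) ⟨n, by omega⟩ = s * r ^ n := by
    simp only [lehmerM_apply, Fin.val_last]
    split_ifs <;> first | rfl | omega
  have hB : (lehmerM r s (n+2)) (Fin.last (n+1)) (Fin.last (n+1)) = 1 := by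
    simp only [lehmerM_apply, Fin.val_last]
    split_ifs <;> first | rfl | omega
  rw [hA, hB, det_minor, Fin.succAbove_last, lehmer_sub,
    Odd.neg_one_pow (show Odd ((Fin.last (n+1) : ℕ) + ((⟨n, by omega⟩ : Fin (n+2)) : ℕ)) by
      exact ⟨n, by simp; ring⟩),
    Even.neg_one_pow (show Even ((Fin.last (n+1) : ℕ) + (Fin.last (n+1) : ℕ)) by simp)]
  ring

/-- With `q = r²` and `z = s²`, the determinant of Lehmer's `n × n` tridiagonal
matrix equals `λ(n) = Σ_{0 ≤ k ≤ n/2} [n-k choose k]_q (-1)^k q^(k(k-1)) z^k`. -/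
theorem det_lehmerM {R : Type*} [CommRing R] (r s : R) (n : ℕ) :
    (lehmerM r s n).det = lam (r ^ 2) (s ^ 2) n := by
  induction n using Nat.strong_induction_on with
  | _ n ih =>
    match n with
    | 0 =>
      rw [show (lehmerM r s 0).det = 1 from Matrix.det_fin_zero]
      simp [lam, qbinom]
    | 1 =>
      rw [Matrix.det_fin_one]
      simp [lam, lehmerM_apply, qbinom_zero_right]
    | (m+2) =>
      rw [det_rec, ih (m+1) (by omega), ih m (by omega), lam_rec]
      ring
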